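/- Let S be a finite semigroup in which all idempotents are central and such that for every idempotent e ∈ S and every a ∈ S with ea = a, the subsemigroup ⟨a⟩ generated by a is a group. Let k ≥ 1 be such that x^k is idempotent for every x ∈ S, and set C := { x^{k+1} : x ∈ S }. Then every product of |S \ C| + 1 elements of S lies in C; that is, the Rees quotient S/C is |S/C|-nilpotent. -/

import Mathlib

/-- Product of a nonempty list of semigroup elements: `a * l₁ * l₂ * ⋯`. -/
def sgProd {S : Type*} [Semigroup S] (a : S) (l : List S) : S :=
  l.foldl (· * ·) a

/-- `spow a m = a ^ m` for `m ≥ 1` (with junk value `a` at `m = 0`). -/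
def spow {S : Type*} [Semigroup S] (a : S) : ℕ → S
  | 0 => a
  | 1 => a
  | (n + 2) => spow a (n + 1) * a

/-- A (two-sided) ideal of a semigroup: a nonempty subset absorbing
multiplication on both sides. -/
def IsIdeal {S : Type*} [Semigroup S] (I : Set S) : Prop :=
  I.Nonempty ∧ ∀ s : S, ∀ x ∈ I, s * x ∈ I ∧ x * s ∈ I

/-- A subset of a semigroup that is a subsemigroup which is a group. -/
def IsGroupSubset {S : Type*} [Semigroup S] (G : Set S) : Prop :=
  (∀ x ∈ G, ∀ y ∈ G, x * y ∈ G) ∧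
    ∃ e ∈ G, (∀ x ∈ G, e * x = x ∧ x * e = x) ∧
      ∀ x ∈ G, ∃ y ∈ G, x * y = e ∧ y * x = e

/-- A subset of a semigroup that is a Clifford semigroup in its own right:
it is closed under multiplication, completely regular (every element lies in a
subsemigroup which is a group), and its idempotents are central in it. -/
def IsCliffordSubset {S : Type*} [Semigroup S] (C : Set S) : Prop :=
  (∀ x ∈ C, ∀ y ∈ C, x * y ∈ C) ∧
    (∀ x ∈ C, ∃ G ⊆ C, IsGroupSubset G ∧ x ∈ G) ∧
    (∀ e ∈ C, e * e = e → ∀ s ∈ C, e * s = s * e)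

/-- A semigroup is a Clifford semigroup. -/
def IsCliffordSG (C : Type*) [Semigroup C] : Prop :=
  IsCliffordSubset (Set.univ : Set C)

/-- A semigroup is nilpotent: for some `d`, any two products of at least `d`
elements are equal. -/
def IsNilpotentSG (N : Type*) [Semigroup N] : Prop :=
  ∃ d : ℕ, ∀ (a b : N) (l l' : List N),
    d ≤ l.length + 1 → d ≤ l'.length + 1 → sgProd a l = sgProd b l'

/-! The set `C` is exactly the set of fixed points of `x ↦ x ^ (k + 1)`: if `b = b ^ m` with
`m ≥ 2` then `b ^ k * b = b`. If `b` is such a fixed point, the idempotent `b ^ k` fixes `b * c`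
from the left, so `⟨b * c⟩` is a group and `b * c` is a fixed point too; hence `C` is a right
ideal and a product lies in `C` as soon as one of its prefixes does. If none of the
`|S \ C| + 1` prefix products lies in `C`, two of them coincide, giving `p = p * q`. Then
`p = p * q ^ k = q ^ k * p` with `q ^ k` a central idempotent, so `p ∈ C` after all. -/

section Spow

variable {S : Type*} [Semigroup S]

lemma spow_succ (a : S) {m : ℕ} (hm : 1 ≤ m) : spow a (m + 1) = spow a m * a := by
  obtain ⟨n, rfl⟩ := Nat.exists_eq_add_of_le' hm
  rfl

lemma spow_add (a : S) {m n : ℕ} (hm : 1 ≤ m) (hn : 1 ≤ n) :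
    spow a (m + n) = spow a m * spow a n := by
  induction n, hn using Nat.le_induction with
  | base => exact spow_succ a hm
  | succ n hn ih =>
    rw [← Nat.add_assoc, spow_succ a (by omega), ih, spow_succ a hn, mul_assoc]

lemma mul_spow_eq_self {p q : S} (h : p * q = p) : ∀ t : ℕ, p * spow q t = p
  | 0 => h
  | 1 => h
  | t + 2 => by rw [spow, ← mul_assoc, mul_spow_eq_self h (t + 1), h]

lemma exists_lt_eq_spow {b : S} {m : ℕ} (hm : 2 ≤ m) (hb : b = spow b m) :
    ∀ N : ℕ, ∃ n, N < n ∧ b = spow b n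
  | 0 => ⟨m, by omega, hb⟩
  | N + 1 => by
    obtain ⟨n, hNn, hbn⟩ := exists_lt_eq_spow hm hb N
    refine ⟨n + (m - 1), by omega, ?_⟩
    rw [spow_add b (by omega) (by omega), ← hbn]
    calc b = spow b m := hb
      _ = spow b (1 + (m - 1)) := by rw [Nat.add_sub_cancel' (by omega)]
      _ = b * spow b (m - 1) := spow_add b le_rfl (by omega)

lemma spow_succ_eq_self_of_eq_spow {b : S} {k : ℕ} (hk : 1 ≤ k)
    (hik : spow b k * spow b k = spow b k) (hb : ∃ m, 2 ≤ m ∧ b = spow b m) :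
    spow b (k + 1) = b := by
  obtain ⟨m, hm, hbm⟩ := hb
  obtain ⟨n, hkn, hbn⟩ := exists_lt_eq_spow hm hbm k
  have hsplit : b = spow b k * spow b (n - k) := by
    rw [← spow_add b hk (by omega), Nat.add_sub_cancel' hkn.le]
    exact hbn
  calc spow b (k + 1) = spow b k * b := spow_succ b hk
    _ = spow b k * (spow b k * spow b (n - k)) := congrArg _ hsplit
    _ = b := by rw [← mul_assoc, hik, ← hsplit]

lemma spow_mul_spow_succ {x : S} {k : ℕ} (hk : 1 ≤ k) (hik : spow x k * spow x k = spow x k) :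
    spow x k * spow x (k + 1) = spow x (k + 1) := by
  rw [spow_succ x hk, ← mul_assoc, hik]

end Spow

section SgProd

variable {S : Type*} [Semigroup S]

@[simp]
lemma sgProd_cons (a c : S) (l : List S) : sgProd a (c :: l) = sgProd (a * c) l := rfl

lemma sgProd_mul (x y : S) (l : List S) : sgProd (x * y) l = x * sgProd y l := by
  induction l generalizing y with
  | nil => rfl
  | cons c l ih => rw [sgProd_cons, sgProd_cons, mul_assoc, ih]

lemma sgProd_append (a : S) (u v : List S) : sgProd a (u ++ v) = sgProd (sgProd a u) v :=
  List.foldl_append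

lemma sgProd_mem_of_mul_mem {P : Set S} (hP : ∀ x ∈ P, ∀ y, x * y ∈ P) {b : S} (hb : b ∈ P)
    (l : List S) : sgProd b l ∈ P := by
  induction l generalizing b with
  | nil => exact hb
  | cons c l ih => exact ih (hP b hb c)

lemma sgProd_mem_of_take_mem {P : Set S} (hP : ∀ x ∈ P, ∀ y, x * y ∈ P) {a : S} {l : List S}
    {i : ℕ} (h : sgProd a (l.take i) ∈ P) : sgProd a l ∈ P := by
  rw [← List.take_append_drop i l, sgProd_append]
  exact sgProd_mem_of_mul_mem hP h _

lemma exists_sgProd_take_eq_mul (a : S) (l : List S) {i j : ℕ} (hij : i < j)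
    (hj : j ≤ l.length) : ∃ q, sgProd a (l.take j) = sgProd a (l.take i) * q := by
  obtain ⟨c, v, hcv⟩ := List.exists_cons_of_ne_nil (l := (l.take j).drop i) (by simp; omega)
  refine ⟨sgProd c v, ?_⟩
  rw [← List.take_append_drop i (l.take j), List.take_take, min_eq_left hij.le, hcv,
    sgProd_append, sgProd_cons, sgProd_mul]

lemma exists_mul_eq_self_of_ncard_le {T : Set S} (hT : T.Finite) {a : S} {l : List S}
    (hlen : T.ncard ≤ l.length) (hmem : ∀ i, sgProd a (l.take i) ∈ T) :
    ∃ p ∈ T, ∃ q, p * q = p := by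
  have hcard : T.ncard < (Set.univ : Set (Fin (l.length + 1))).ncard := by
    rw [Set.ncard_univ, Nat.card_eq_fintype_card, Fintype.card_fin]
    omega
  obtain ⟨i, -, j, -, hij, heq⟩ :=
    Set.exists_ne_map_eq_of_ncard_lt_of_maps_to hcard (fun i _ => hmem i.1) hT
  rcases Nat.lt_or_gt_of_ne (Fin.val_ne_of_ne hij) with h | h
  · obtain ⟨q, hq⟩ := exists_sgProd_take_eq_mul a l h (by omega)
    exact ⟨_, hmem i, q, hq.symm.trans heq.symm⟩
  · obtain ⟨q, hq⟩ := exists_sgProd_take_eq_mul a l h (by omega)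
    exact ⟨_, hmem j, q, hq.symm.trans heq⟩

end SgProd

section FixedPoints

variable {S : Type*} [Semigroup S] {k : ℕ}

lemma spow_succ_eq_self_of_idem_mul
    (hgrp : ∀ e a : S, e * e = e → e * a = a → ∃ m, 2 ≤ m ∧ a = spow a m)
    (hk : 1 ≤ k) (hik : ∀ x : S, spow x k * spow x k = spow x k) {e b : S}
    (he : e * e = e) (heb : e * b = b) : spow b (k + 1) = b :=
  spow_succ_eq_self_of_eq_spow hk (hik b) (hgrp e b he heb)

lemma spow_succ_spow_succ
    (hgrp : ∀ e a : S, e * e = e → e * a = a → ∃ m, 2 ≤ m ∧ a = spow a m)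
    (hk : 1 ≤ k) (hik : ∀ x : S, spow x k * spow x k = spow x k) (x : S) :
    spow (spow x (k + 1)) (k + 1) = spow x (k + 1) :=
  spow_succ_eq_self_of_idem_mul hgrp hk hik (hik x) (spow_mul_spow_succ hk (hik x))

lemma spow_succ_mul_eq_self
    (hgrp : ∀ e a : S, e * e = e → e * a = a → ∃ m, 2 ≤ m ∧ a = spow a m)
    (hk : 1 ≤ k) (hik : ∀ x : S, spow x k * spow x k = spow x k) {b : S}
    (hb : spow b (k + 1) = b) (c : S) : spow (b * c) (k + 1) = b * c := by
  refine spow_succ_eq_self_of_idem_mul hgrp hk hik (hik b) ?_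
  rw [← mul_assoc, ← spow_succ b hk, hb]

lemma spow_succ_eq_self_of_mul_eq_self (hcen : ∀ e s : S, e * e = e → e * s = s * e)
    (hgrp : ∀ e a : S, e * e = e → e * a = a → ∃ m, 2 ≤ m ∧ a = spow a m)
    (hk : 1 ≤ k) (hik : ∀ x : S, spow x k * spow x k = spow x k) {p q : S}
    (h : p * q = p) : spow p (k + 1) = p := by
  refine spow_succ_eq_self_of_idem_mul hgrp hk hik (hik q) ?_
  rw [hcen _ p (hik q), mul_spow_eq_self h]

end FixedPoints

theorem stmt6_general {S : Type*} [Semigroup S] [Finite S]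
    (hcen : ∀ e s : S, e * e = e → e * s = s * e)
    (hgrp : ∀ e a : S, e * e = e → e * a = a → ∃ m, 2 ≤ m ∧ a = spow a m)
    (k : ℕ) (hk : 1 ≤ k) (hik : ∀ x : S, spow x k * spow x k = spow x k) :
    ∀ (a : S) (l : List S),
      l.length = Set.ncard {y : S | ∃ x : S, y = spow x (k + 1)}ᶜ →
      sgProd a l ∈ {y : S | ∃ x : S, y = spow x (k + 1)} := by
  intro a l hlen
  set C : Set S := {y : S | ∃ x : S, y = spow x (k + 1)}
  have hideal : ∀ x ∈ C, ∀ y, x * y ∈ C := by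
    rintro _ ⟨x, rfl⟩ y
    exact ⟨_, (spow_succ_mul_eq_self hgrp hk hik (spow_succ_spow_succ hgrp hk hik x) y).symm⟩
  by_contra hout
  have hprefix : ∀ i, sgProd a (l.take i) ∈ Cᶜ :=
    fun i hi => hout (sgProd_mem_of_take_mem hideal hi)
  obtain ⟨p, hp, q, hpq⟩ := exists_mul_eq_self_of_ncard_le (Set.toFinite _) hlen.ge hprefix
  exact hp ⟨p, (spow_succ_eq_self_of_mul_eq_self hcen hgrp hk hik hpq).symm⟩

/-- In a finite semigroup with central idempotents where `e * a = a`
(`e` idempotent) forces `⟨a⟩` to be a group, if `x ^ k` is idempotent for all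
`x` (`k ≥ 1`) and `C := { x ^ (k+1) : x ∈ S }`, then every product of
`|S \ C| + 1` elements of `S` lies in `C`. -/
theorem stmt6 {S : Type*} [Semigroup S] [Finite S] [Nonempty S]
    (hcen : ∀ e s : S, e * e = e → e * s = s * e)
    (hgrp : ∀ e a : S, e * e = e → e * a = a → ∃ m, 2 ≤ m ∧ a = spow a m)
    (k : ℕ) (hk : 1 ≤ k) (hik : ∀ x : S, spow x k * spow x k = spow x k) :
    ∀ (a : S) (l : List S),
      l.length = Set.ncard {y : S | ∃ x : S, y = spow x (k + 1)}ᶜ →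
      sgProd a l ∈ {y : S | ∃ x : S, y = spow x (k + 1)} :=
  stmt6_general hcen hgrp k hk hik
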